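/- arXiv:2410.10485 — 3 statements merged into one kernel-verified Lean document; each statement's English description precedes it below -/
import Mathlib

section
/- For every integer k with 1 ≤ k ≤ n−1, the average conditional pairwise mutual information u_k(X) satisfies u_k(X) = 2·r_k(X) − r_{k+1}(X) − r_{k−1}(X). -/
open MeasureTheory Finset

noncomputable section

variable {Ω : Type*} [MeasurableSpace Ω]

/-- Shannon entropy of a finite-valued random variable `Z` under the measure `μ`
(with the convention that the entropy of an empty tuple is `negMulLog (μ univ) = 0`
for a probability measure). -/
def ent {α : Type*} [Fintype α] (μ : Measure Ω) (Z : Ω → α) : ℝ :=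
  ∑ z : α, Real.negMulLog ((μ (Z ⁻¹' {z})).toReal)

/-- Conditional entropy `H(A | B)`. -/
def condEnt {α β : Type*} [Fintype α] [Fintype β] (μ : Measure Ω)
    (A : Ω → α) (B : Ω → β) : ℝ :=
  ent μ (fun ω => (A ω, B ω)) - ent μ B

/-- Mutual information `I(A ; B)`. -/
def mi {α β : Type*} [Fintype α] [Fintype β] (μ : Measure Ω)
    (A : Ω → α) (B : Ω → β) : ℝ :=
  ent μ A + ent μ B - ent μ (fun ω => (A ω, B ω))

/-- Conditional mutual information `I(A ; B | C)`. -/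
def cmi {α β γ : Type*} [Fintype α] [Fintype β] [Fintype γ] (μ : Measure Ω)
    (A : Ω → α) (B : Ω → β) (C : Ω → γ) : ℝ :=
  ent μ (fun ω => (A ω, C ω)) + ent μ (fun ω => (B ω, C ω))
    - ent μ (fun ω => (A ω, B ω, C ω)) - ent μ C

/-- The sub-tuple `X^a = (X_i)_{i ∈ a}` of the random vector `X = (X_1, …, X_n)`. -/
def restr {n : ℕ} {S : Type*} (X : Fin n → Ω → S) (a : Finset (Fin n)) :
    Ω → (a → S) :=
  fun ω i => X i.1 ω

/-- Average subset entropy `r_k(X) = C(n,k)⁻¹ ∑_{|a| = k} H(X^a)`. -/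
def rE {n : ℕ} {S : Type*} [Fintype S] (μ : Measure Ω) (X : Fin n → Ω → S) (k : ℕ) : ℝ :=
  ((n.choose k : ℝ))⁻¹ *
    ∑ a ∈ univ.powerset.filter (fun a : Finset (Fin n) => a.card = k), ent μ (restr X a)

/-- Average conditional pairwise mutual information
`u_k(X) = (C(n,k+1) C(k+1,2))⁻¹ ∑_{i<j} ∑_{|a| = k-1, i,j ∉ a} I(X_i ; X_j | X^a)`. -/
def uI {n : ℕ} {S : Type*} [Fintype S] (μ : Measure Ω) (X : Fin n → Ω → S) (k : ℕ) : ℝ :=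
  ((n.choose (k + 1) : ℝ) * ((k + 1).choose 2 : ℝ))⁻¹ *
    ∑ p ∈ univ.filter (fun p : Fin n × Fin n => p.1 < p.2),
      ∑ a ∈ (univ \ ({p.1, p.2} : Finset (Fin n))).powerset.filter
          (fun a : Finset (Fin n) => a.card = k - 1),
        cmi μ (X p.1) (X p.2) (restr X a)

lemma ent_comp_inj {α β : Type*} [Fintype α] [Fintype β] (μ : Measure Ω)
    (Z : Ω → α) (e : α → β) (he : Function.Injective e) :
    ent μ (fun ω => e (Z ω)) = ent μ Z := by
  classical
  have h1 : ∀ a : α, Z ⁻¹' {a} = (fun ω => e (Z ω)) ⁻¹' {e a} := by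
    intro a; ext ω; simp [he.eq_iff]
  calc ent μ (fun ω => e (Z ω))
      = ∑ b ∈ Finset.univ.image e,
          Real.negMulLog ((μ ((fun ω => e (Z ω)) ⁻¹' {b})).toReal) := by
        rw [ent]
        symm
        apply Finset.sum_subset (Finset.subset_univ _)
        intro b _ hb
        have h0 : (fun ω => e (Z ω)) ⁻¹' {b} = ∅ := by
          ext ω
          simp only [Set.mem_preimage, Set.mem_singleton_iff, Set.mem_empty_iff_false, iff_false]
          intro h; exact hb (Finset.mem_image.2 ⟨Z ω, Finset.mem_univ _, h⟩)
        simp [h0]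
    _ = ∑ a : α, Real.negMulLog ((μ ((fun ω => e (Z ω)) ⁻¹' {e a})).toReal) :=
        Finset.sum_image (fun a _ a' _ h => he h)
    _ = ent μ Z := by rw [ent]; congr 1; ext a; rw [h1]

lemma ent_pair_restr {n : ℕ} {S : Type*} [Fintype S] (μ : Measure Ω)
    (X : Fin n → Ω → S) (i : Fin n) (a : Finset (Fin n)) :
    ent μ (fun ω => (X i ω, restr X a ω)) = ent μ (restr X (insert i a)) := by
  classical
  have h := ent_comp_inj μ (restr X (insert i a))
    (fun g => (g ⟨i, Finset.mem_insert_self i a⟩,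
               fun j : a => g ⟨j.1, Finset.mem_insert_of_mem j.2⟩))
    (by
      intro g g' h
      funext x
      obtain ⟨x, hx⟩ := x
      rcases Finset.mem_insert.1 hx with h1 | h1
      · subst h1; exact congrArg Prod.fst h
      · exact congrFun (congrArg Prod.snd h) ⟨x, h1⟩)
  rw [← h]; rfl

lemma ent_triple_restr {n : ℕ} {S : Type*} [Fintype S] (μ : Measure Ω)
    (X : Fin n → Ω → S) (i j : Fin n) (a : Finset (Fin n)) :
    ent μ (fun ω => (X i ω, X j ω, restr X a ω))
      = ent μ (restr X (insert i (insert j a))) := by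
  classical
  have h := ent_comp_inj μ (restr X (insert i (insert j a)))
    (fun g => (g ⟨i, Finset.mem_insert_self i _⟩,
               g ⟨j, Finset.mem_insert_of_mem (Finset.mem_insert_self j a)⟩,
               fun x : a => g ⟨x.1, Finset.mem_insert_of_mem (Finset.mem_insert_of_mem x.2)⟩))
    (by
      intro g g' h
      funext x
      obtain ⟨x, hx⟩ := x
      rcases Finset.mem_insert.1 hx with h1 | h1
      · subst h1; exact congrArg Prod.fst h
      · rcases Finset.mem_insert.1 h1 with h2 | h2
        · subst h2; exact congrArg Prod.fst (congrArg Prod.snd h)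
        · exact congrFun (congrArg Prod.snd (congrArg Prod.snd h)) ⟨x, h2⟩)
  rw [← h]; rfl

lemma cmi_restr_eq {n : ℕ} {S : Type*} [Fintype S] (μ : Measure Ω)
    (X : Fin n → Ω → S) (i j : Fin n) (a : Finset (Fin n)) :
    cmi μ (X i) (X j) (restr X a)
      = ent μ (restr X (insert i a)) + ent μ (restr X (insert j a))
        - ent μ (restr X (insert i (insert j a))) - ent μ (restr X a) := by
  rw [cmi, ent_pair_restr, ent_pair_restr, ent_triple_restr]

lemma card_pairs_lt {n : ℕ} (s : Finset (Fin n)) :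
    ((univ : Finset (Fin n × Fin n)).filter
      (fun p => p.1 < p.2 ∧ p.1 ∈ s ∧ p.2 ∈ s)).card = s.card.choose 2 := by
  classical
  rw [← Finset.card_powersetCard 2 s]
  apply Finset.card_bij (fun p _ => ({p.1, p.2} : Finset (Fin n)))
  · intro p hp
    simp only [mem_filter, mem_univ, true_and] at hp
    rw [Finset.mem_powersetCard]
    constructor
    · intro x hx
      rcases Finset.mem_insert.1 hx with h | h
      · subst h; exact hp.2.1
      · rw [Finset.mem_singleton.1 h]; exact hp.2.2
    · rw [Finset.card_insert_of_notMem (by simp [hp.1.ne]), Finset.card_singleton]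
  · intro p hp q hq hpq
    simp only [mem_filter, mem_univ, true_and] at hp hq
    have e1 : p.1 = q.1 ∨ p.1 = q.2 := by
      have := hpq ▸ Finset.mem_insert_self p.1 {p.2}
      simpa using this
    have e2 : p.2 = q.1 ∨ p.2 = q.2 := by
      have := hpq ▸ Finset.mem_insert_of_mem (Finset.mem_singleton_self p.2)
      simpa using this
    rcases e1 with h1 | h1 <;> rcases e2 with h2 | h2
    · exact absurd (h1 ▸ h2 ▸ hp.1) (lt_irrefl _)
    · exact Prod.ext h1 h2
    · exact absurd (hq.1.trans (h2 ▸ h1 ▸ hp.1)) (lt_irrefl _)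
    · exact absurd (h1 ▸ h2 ▸ hp.1) (lt_irrefl _)
  · intro t ht
    rw [Finset.mem_powersetCard] at ht
    obtain ⟨x, y, hxy, rfl⟩ := Finset.card_eq_two.1 ht.2
    rcases hxy.lt_or_gt with h | h
    · exact ⟨(x, y), Finset.mem_filter.2 ⟨Finset.mem_univ _,
        h, ht.1 (by simp), ht.1 (by simp)⟩, rfl⟩
    · exact ⟨(y, x), Finset.mem_filter.2 ⟨Finset.mem_univ _,
        h, ht.1 (by simp), ht.1 (by simp)⟩, (Finset.pair_comm x y).symm⟩

lemma sum_insert_elem {n m : ℕ} (f : Finset (Fin n) → ℝ) :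
    ∑ x : Fin n, ∑ a ∈ Finset.powersetCard m (univ \ {x}), f (insert x a)
      = (m + 1 : ℝ) * ∑ b ∈ Finset.powersetCard (m+1) (univ : Finset (Fin n)), f b := by
  classical
  rw [Finset.mul_sum]
  have hc : ∀ b ∈ Finset.powersetCard (m+1) (univ : Finset (Fin n)),
      (m+1:ℝ) * f b = ∑ _x ∈ b, f b := by
    intro b hb
    rw [Finset.sum_const, (Finset.mem_powersetCard.1 hb).2, nsmul_eq_mul]
    push_cast; ring
  rw [Finset.sum_congr rfl hc, Finset.sum_sigma', Finset.sum_sigma']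
  refine Finset.sum_nbij' (fun p => ⟨insert p.1 p.2, p.1⟩) (fun q => ⟨q.2, q.1.erase q.2⟩)
    ?_ ?_ ?_ ?_ ?_
  · rintro ⟨x, a⟩ hp
    simp only [Finset.mem_sigma, Finset.mem_univ, true_and, Finset.mem_powersetCard] at hp ⊢
    have hx : x ∉ a := fun hxa => by simpa using hp.1 hxa
    exact ⟨⟨Finset.subset_univ _, by rw [Finset.card_insert_of_notMem hx, hp.2]⟩,
      Finset.mem_insert_self _ _⟩
  · rintro ⟨b, x⟩ hq
    simp only [Finset.mem_sigma, Finset.mem_univ, true_and, Finset.mem_powersetCard] at hq ⊢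
    refine ⟨fun y hy => by simp [Finset.mem_erase.1 hy |>.1], ?_⟩
    rw [Finset.card_erase_of_mem hq.2, hq.1.2]
    omega
  · rintro ⟨x, a⟩ hp
    simp only [Finset.mem_sigma, Finset.mem_univ, true_and, Finset.mem_powersetCard] at hp
    have hx : x ∉ a := fun hxa => by simpa using hp.1 hxa
    simp [Finset.erase_insert hx]
  · rintro ⟨b, x⟩ hq
    simp only [Finset.mem_sigma, Finset.mem_powersetCard] at hq
    simp [Finset.insert_erase hq.2]
  · rintro ⟨x, a⟩ _; rfl

lemma sum_insert_pair {n m : ℕ} (f : Finset (Fin n) → ℝ) :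
    ∑ p ∈ (univ : Finset (Fin n × Fin n)).filter (fun p => p.1 < p.2),
      ∑ a ∈ Finset.powersetCard m (univ \ {p.1, p.2}), f (insert p.1 (insert p.2 a))
      = ((m+2).choose 2 : ℝ) * ∑ b ∈ Finset.powersetCard (m+2) (univ : Finset (Fin n)), f b := by
  classical
  rw [Finset.mul_sum]
  have hc : ∀ b ∈ Finset.powersetCard (m+2) (univ : Finset (Fin n)),
      ((m+2).choose 2 : ℝ) * f b
        = ∑ _p ∈ (univ : Finset (Fin n × Fin n)).filter
            (fun p => p.1 < p.2 ∧ p.1 ∈ b ∧ p.2 ∈ b), f b := by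
    intro b hb
    rw [Finset.sum_const, card_pairs_lt, (Finset.mem_powersetCard.1 hb).2, nsmul_eq_mul]
  rw [Finset.sum_congr rfl hc, Finset.sum_sigma', Finset.sum_sigma']
  refine Finset.sum_nbij' (fun q => ⟨insert q.1.1 (insert q.1.2 q.2), q.1⟩)
    (fun q => ⟨q.2, (q.1.erase q.2.1).erase q.2.2⟩) ?_ ?_ ?_ ?_ ?_
  · rintro ⟨p, a⟩ hq
    simp only [Finset.mem_sigma, Finset.mem_filter, Finset.mem_univ, true_and,
      Finset.mem_powersetCard, Finset.subset_sdiff, Finset.disjoint_insert_right,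
      Finset.disjoint_singleton_right] at hq ⊢
    obtain ⟨hlt, ⟨⟨_, h1, h2⟩, hcard⟩⟩ := hq
    have hne : p.1 ≠ p.2 := hlt.ne
    have hp1 : p.1 ∉ insert p.2 a := by simp [hne, h1]
    refine ⟨⟨Finset.subset_univ _, ?_⟩, hlt, Finset.mem_insert_self _ _,
      Finset.mem_insert_of_mem (Finset.mem_insert_self _ _)⟩
    rw [Finset.card_insert_of_notMem hp1, Finset.card_insert_of_notMem h2, hcard]
  · rintro ⟨b, p⟩ hq
    simp only [Finset.mem_sigma, Finset.mem_filter, Finset.mem_univ, true_and,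
      Finset.mem_powersetCard, Finset.subset_sdiff, Finset.disjoint_insert_right,
      Finset.disjoint_singleton_right] at hq ⊢
    obtain ⟨⟨_, hcard⟩, hlt, hb1, hb2⟩ := hq
    refine ⟨hlt, ⟨Finset.subset_univ _, ?_, ?_⟩, ?_⟩
    · simp [Finset.mem_erase]
    · simp [Finset.mem_erase]
    · rw [Finset.card_erase_of_mem (Finset.mem_erase.2 ⟨hlt.ne', hb2⟩),
        Finset.card_erase_of_mem hb1, hcard]
      omega
  · rintro ⟨p, a⟩ hq
    simp only [Finset.mem_sigma, Finset.mem_filter, Finset.mem_univ, true_and,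
      Finset.mem_powersetCard, Finset.subset_sdiff, Finset.disjoint_insert_right,
      Finset.disjoint_singleton_right] at hq
    obtain ⟨hlt, ⟨⟨_, h1, h2⟩, _⟩⟩ := hq
    have hp1 : p.1 ∉ insert p.2 a := by simp [hlt.ne, h1]
    simp [Finset.erase_insert hp1, Finset.erase_insert h2]
  · rintro ⟨b, p⟩ hq
    simp only [Finset.mem_sigma, Finset.mem_filter, Finset.mem_univ, true_and,
      Finset.mem_powersetCard] at hq
    obtain ⟨_, hlt, hb1, hb2⟩ := hq
    simp [Finset.insert_erase (Finset.mem_erase.2 ⟨hlt.ne', hb2⟩), Finset.insert_erase hb1]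
  · rintro ⟨p, a⟩ _; rfl

lemma sum_avoid_pair {n m : ℕ} (f : Finset (Fin n) → ℝ) :
    ∑ p ∈ (univ : Finset (Fin n × Fin n)).filter (fun p => p.1 < p.2),
      ∑ a ∈ Finset.powersetCard m (univ \ {p.1, p.2}), f a
      = ((n - m).choose 2 : ℝ) * ∑ a ∈ Finset.powersetCard m (univ : Finset (Fin n)), f a := by
  classical
  have h1 : ∀ p : Fin n × Fin n,
      ∑ a ∈ Finset.powersetCard m (univ \ {p.1, p.2}), f a
        = ∑ a ∈ Finset.powersetCard m (univ : Finset (Fin n)),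
            if p.1 ∉ a ∧ p.2 ∉ a then f a else 0 := by
    intro p
    rw [← Finset.sum_filter]
    congr 1
    ext a
    simp only [Finset.mem_powersetCard, Finset.mem_filter, Finset.subset_univ, true_and,
      Finset.subset_sdiff, Finset.disjoint_insert_right, Finset.disjoint_singleton_right]
    tauto
  rw [Finset.sum_congr rfl (fun p _ => h1 p), Finset.sum_comm, Finset.mul_sum]
  refine Finset.sum_congr rfl fun a ha => ?_
  rw [← Finset.sum_filter, Finset.sum_const, Finset.filter_filter]
  have h2 : (univ : Finset (Fin n × Fin n)).filter
      (fun p => p.1 < p.2 ∧ p.1 ∉ a ∧ p.2 ∉ a)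
      = (univ : Finset (Fin n × Fin n)).filter
          (fun p => p.1 < p.2 ∧ p.1 ∈ univ \ a ∧ p.2 ∈ univ \ a) := by
    apply Finset.filter_congr
    intro p _
    simp [Finset.mem_sdiff]
  rw [h2, card_pairs_lt, Finset.card_sdiff_of_subset (Finset.subset_univ a), Finset.card_univ,
    Fintype.card_fin, (Finset.mem_powersetCard.1 ha).2, nsmul_eq_mul]

lemma sum_insert_one {n m : ℕ} (f : Finset (Fin n) → ℝ) :
    ∑ p ∈ (univ : Finset (Fin n × Fin n)).filter (fun p => p.1 < p.2),
      ∑ a ∈ Finset.powersetCard m (univ \ {p.1, p.2}), (f (insert p.1 a) + f (insert p.2 a))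
      = ((n - (m+1) : ℕ) : ℝ) *
          ((m + 1 : ℝ) * ∑ b ∈ Finset.powersetCard (m+1) (univ : Finset (Fin n)), f b) := by
  classical
  have hswap : ∑ p ∈ (univ : Finset (Fin n × Fin n)).filter (fun p => p.1 < p.2),
      ∑ a ∈ Finset.powersetCard m (univ \ {p.1, p.2}), f (insert p.2 a)
      = ∑ p ∈ (univ : Finset (Fin n × Fin n)).filter (fun p => p.2 < p.1),
          ∑ a ∈ Finset.powersetCard m (univ \ {p.1, p.2}), f (insert p.1 a) := by
    refine Finset.sum_nbij' Prod.swap Prod.swap ?_ ?_ ?_ ?_ ?_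
    · intro p hp; simpa using (Finset.mem_filter.1 hp).2
    · intro p hp; simpa using (Finset.mem_filter.1 hp).2
    · intro p _; rfl
    · intro p _; rfl
    · intro p _
      rw [Finset.pair_comm p.1 p.2]
      rfl
  have hsplit : ∑ p ∈ (univ : Finset (Fin n × Fin n)).filter (fun p => p.1 < p.2),
      ∑ a ∈ Finset.powersetCard m (univ \ {p.1, p.2}), (f (insert p.1 a) + f (insert p.2 a))
      = ∑ p ∈ (univ : Finset (Fin n × Fin n)).filter (fun p => p.1 ≠ p.2),
          ∑ a ∈ Finset.powersetCard m (univ \ {p.1, p.2}), f (insert p.1 a) := by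
    have hd : Disjoint ((univ : Finset (Fin n × Fin n)).filter (fun p => p.1 < p.2))
        ((univ : Finset (Fin n × Fin n)).filter (fun p => p.2 < p.1)) := by
      rw [Finset.disjoint_left]
      intro p h1 h2
      exact absurd ((Finset.mem_filter.1 h1).2.trans (Finset.mem_filter.1 h2).2) (lt_irrefl _)
    have hu : (univ : Finset (Fin n × Fin n)).filter (fun p => p.1 ≠ p.2)
        = (univ : Finset (Fin n × Fin n)).filter (fun p => p.1 < p.2)
          ∪ (univ : Finset (Fin n × Fin n)).filter (fun p => p.2 < p.1) := by
      rw [← Finset.filter_or]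
      apply Finset.filter_congr
      intro p _
      exact ne_iff_lt_or_gt
    rw [hu, Finset.sum_union hd, ← hswap, ← Finset.sum_add_distrib]
    exact Finset.sum_congr rfl fun p _ => Finset.sum_add_distrib
  rw [hsplit]
  have h1 : ∀ x : Fin n, ∀ y : Fin n,
      (if x ≠ y then ∑ a ∈ Finset.powersetCard m (univ \ {x, y}), f (insert x a) else 0)
      = ∑ a ∈ Finset.powersetCard m (univ \ {x}),
          if y ∉ a ∧ y ≠ x then f (insert x a) else 0 := by
    intro x y
    by_cases hxy : x = y
    · subst hxy
      rw [if_neg (fun h => h rfl)]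
      symm
      apply Finset.sum_eq_zero
      intro a _
      rw [if_neg]
      rintro ⟨-, h⟩
      exact h rfl
    · have hyx : y ≠ x := Ne.symm hxy
      rw [if_pos hxy, ← Finset.sum_filter]
      congr 1
      ext a
      simp only [Finset.mem_powersetCard, Finset.mem_filter, Finset.subset_sdiff,
        Finset.disjoint_insert_right, Finset.disjoint_singleton_right, Finset.subset_univ,
        true_and]
      tauto
  rw [Finset.sum_filter, Fintype.sum_prod_type]
  have h2 : ∀ x : Fin n,
      (∑ y : Fin n, if x ≠ y then
          ∑ a ∈ Finset.powersetCard m (univ \ {x, y}), f (insert x a) else 0)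
      = ((n - (m+1) : ℕ) : ℝ) * ∑ a ∈ Finset.powersetCard m (univ \ {x}), f (insert x a) := by
    intro x
    rw [Finset.sum_congr rfl (fun y _ => h1 x y), Finset.sum_comm, Finset.mul_sum]
    refine Finset.sum_congr rfl fun a ha => ?_
    rw [← Finset.sum_filter, Finset.sum_const]
    have hmem := Finset.mem_powersetCard.1 ha
    have hx : x ∉ a := by
      intro hxa
      have := hmem.1 hxa
      simp at this
    have hfa : (univ : Finset (Fin n)).filter (fun y => y ∉ a ∧ y ≠ x)
        = univ \ insert x a := by
      ext y
      simp only [Finset.mem_filter, Finset.mem_univ, true_and, Finset.mem_sdiff,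
        Finset.mem_insert]
      tauto
    rw [hfa, Finset.card_sdiff_of_subset (Finset.subset_univ _), Finset.card_univ, Fintype.card_fin,
      Finset.card_insert_of_notMem hx, hmem.2, nsmul_eq_mul]
  rw [Finset.sum_congr rfl (fun x _ => h2 x), ← Finset.mul_sum, sum_insert_elem]


/-- For every `1 ≤ k ≤ n-1`,
`u_k(X) = 2 r_k(X) − r_{k+1}(X) − r_{k-1}(X)`. -/
theorem u_eq_two_r_sub_r {Ω S : Type*} [MeasurableSpace Ω]
    [Fintype S] [MeasurableSpace S] [MeasurableSingletonClass S]
    {n : ℕ} (hn : 2 ≤ n) (μ : Measure Ω) [IsProbabilityMeasure μ]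
    (X : Fin n → Ω → S) (hX : ∀ i, Measurable (X i))
    (k : ℕ) (hk1 : 1 ≤ k) (hk2 : k ≤ n - 1) :
    uI μ X k = 2 * rE μ X k - rE μ X (k + 1) - rE μ X (k - 1) := by
  classical
  have hkn : k + 1 ≤ n := by omega
  have e1 : k - 1 + 1 = k := by omega
  have e2 : k - 1 + 2 = k + 1 := by omega
  have e3 : n - (k - 1) = n - k + 1 := by omega
  set F : Finset (Fin n) → ℝ := fun b => ent μ (restr X b) with hF
  have hsum : ∑ p ∈ univ.filter (fun p : Fin n × Fin n => p.1 < p.2),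
      ∑ a ∈ Finset.powersetCard (k - 1) (univ \ ({p.1, p.2} : Finset (Fin n))),
        cmi μ (X p.1) (X p.2) (restr X a)
      = ((n - k : ℕ) : ℝ) * (((k - 1 : ℕ) + 1 : ℝ) *
            ∑ b ∈ Finset.powersetCard k (univ : Finset (Fin n)), F b)
        - ((k + 1).choose 2 : ℝ) * ∑ b ∈ Finset.powersetCard (k+1) (univ : Finset (Fin n)), F b
        - (((n - k + 1).choose 2 : ℕ) : ℝ) *
            ∑ b ∈ Finset.powersetCard (k-1) (univ : Finset (Fin n)), F b := by
    have h := sum_insert_one (n := n) (m := k - 1) F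
    rw [e1] at h
    have h2 := sum_insert_pair (n := n) (m := k - 1) F
    rw [e2] at h2
    have h3 := sum_avoid_pair (n := n) (m := k - 1) F
    rw [e3] at h3
    rw [← h, ← h2, ← h3, ← Finset.sum_sub_distrib, ← Finset.sum_sub_distrib]
    refine Finset.sum_congr rfl fun p _ => ?_
    rw [← Finset.sum_sub_distrib, ← Finset.sum_sub_distrib]
    refine Finset.sum_congr rfl fun a _ => ?_
    rw [cmi_restr_eq]
  have hA1 : (0:ℝ) < (n.choose (k+1) : ℝ) := by
    exact_mod_cast Nat.choose_pos hkn
  have hA0 : (0:ℝ) < (n.choose k : ℝ) := by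
    exact_mod_cast Nat.choose_pos (by omega : k ≤ n)
  have hAm : (0:ℝ) < (n.choose (k-1) : ℝ) := by
    exact_mod_cast Nat.choose_pos (by omega : k - 1 ≤ n)
  have hB : (0:ℝ) < ((k+1).choose 2 : ℝ) := by
    exact_mod_cast Nat.choose_pos (by omega : 2 ≤ k + 1)
  have f1 : ((k+1).choose 2 : ℝ) * 2 = ((k:ℝ)+1) * k := by
    have := Nat.choose_succ_right_eq (k+1) 1
    rw [Nat.choose_one_right] at this
    exact_mod_cast this
  have f2 : (((n-k+1).choose 2 : ℕ) : ℝ) * 2 = (((n-k+1:ℕ)):ℝ) * ((n-k:ℕ):ℝ) := by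
    have := Nat.choose_succ_right_eq (n-k+1) 1
    rw [Nat.choose_one_right] at this
    have e : n - k + 1 - 1 = n - k := by omega
    rw [e] at this
    exact_mod_cast this
  have f3 : (n.choose (k+1) : ℝ) * ((k:ℝ)+1) = (n.choose k : ℝ) * ((n-k:ℕ):ℝ) := by
    have := Nat.choose_succ_right_eq n k
    exact_mod_cast this
  have f4 : (n.choose k : ℝ) * (k:ℝ) = (n.choose (k-1) : ℝ) * ((n-k+1:ℕ):ℝ) := by
    have := Nat.choose_succ_right_eq n (k-1)
    rw [e1, e3] at this
    exact_mod_cast this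
  have hco1 : ((n.choose (k+1) : ℝ) * ((k+1).choose 2 : ℝ))⁻¹ * (((n-k:ℕ):ℝ) * (k:ℝ))
      = 2 * (n.choose k : ℝ)⁻¹ := by
    field_simp
    linear_combination -((n.choose (k+1) : ℝ) * f1 + (k:ℝ) * f3)
  have hco2 : ((n.choose (k+1) : ℝ) * ((k+1).choose 2 : ℝ))⁻¹ * ((k+1).choose 2 : ℝ)
      = (n.choose (k+1) : ℝ)⁻¹ := by
    field_simp
  have hco3 : ((n.choose (k+1) : ℝ) * ((k+1).choose 2 : ℝ))⁻¹ * (((n-k+1).choose 2 : ℕ) : ℝ)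
      = (n.choose (k-1) : ℝ)⁻¹ := by
    field_simp
    linear_combination ((n.choose (k-1):ℝ) * f2 - (n.choose (k+1):ℝ) * f1
      - (k:ℝ) * f3 - ((n-k:ℕ):ℝ) * f4) / 2
  have hcast : (((k - 1 : ℕ) : ℝ) + 1) = (k : ℝ) := by
    have h5 : ((k - 1 : ℕ) : ℝ) = (k : ℝ) - 1 := by
      have := Nat.cast_sub (R := ℝ) hk1
      simpa using this
    rw [h5]; ring
  rw [uI, rE, rE, rE]
  simp only [← Finset.powersetCard_eq_filter]
  rw [hsum, hcast]
  calc ((n.choose (k + 1) : ℝ) * ((k + 1).choose 2 : ℝ))⁻¹ *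
        (((n - k : ℕ) : ℝ) * ((k:ℝ) * ∑ b ∈ Finset.powersetCard k (univ : Finset (Fin n)), F b)
          - ((k + 1).choose 2 : ℝ) * ∑ b ∈ Finset.powersetCard (k+1) (univ : Finset (Fin n)), F b
          - (((n - k + 1).choose 2 : ℕ) : ℝ) *
              ∑ b ∈ Finset.powersetCard (k-1) (univ : Finset (Fin n)), F b)
      = (((n.choose (k + 1) : ℝ) * ((k + 1).choose 2 : ℝ))⁻¹ * (((n - k : ℕ) : ℝ) * (k:ℝ))) *
            (∑ b ∈ Finset.powersetCard k (univ : Finset (Fin n)), F b)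
        - (((n.choose (k + 1) : ℝ) * ((k + 1).choose 2 : ℝ))⁻¹ * ((k + 1).choose 2 : ℝ)) *
            (∑ b ∈ Finset.powersetCard (k+1) (univ : Finset (Fin n)), F b)
        - (((n.choose (k + 1) : ℝ) * ((k + 1).choose 2 : ℝ))⁻¹ * (((n - k + 1).choose 2 : ℕ) : ℝ)) *
            (∑ b ∈ Finset.powersetCard (k-1) (univ : Finset (Fin n)), F b) := by ring
    _ = _ := by rw [hco1, hco2, hco3]; ring
end
end

section
/- For every integer k with 1 ≤ k ≤ n−1, replacing each conditioning set by its complement in the definition of u_k yields u_{n−k}; that is, (C(n,k+1)·C(k+1,2))^{-1} Σ_{1≤i<j≤n} Σ_{a⊆{1,…,n}∖{i,j}, |a|=k−1} I(X_i; X_j | X^{{1,…,n}∖(a∪{i,j})}) = u_{n−k}(X). -/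
open MeasureTheory Finset

noncomputable section

variable {Ω : Type*} [MeasurableSpace Ω]

/-
Conjugation sends the conditioning set `a` of a term `I(X_i; X_j | X^a)` of `u_k` to the
complement of `a` inside `{1,…,n} ∖ {i,j}`, a bijection from the `(k-1)`-subsets onto the
`(n-k-1)`-subsets of that `(n-2)`-set. The normalising constants agree because both equal
`C(n,2)·C(n-2,k-1)`: choose the pair `{i,j}` first, then the rest of the `(k+1)`-set.
-/

theorem Nat.choose_succ_mul_choose_two {k : ℕ} (n : ℕ) (hk : 1 ≤ k) :
    n.choose (k + 1) * (k + 1).choose 2 = n.choose 2 * (n - 2).choose (k - 1) := by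
  rw [Nat.choose_mul (by omega), show k + 1 - 2 = k - 1 by omega]

theorem Nat.choose_succ_mul_choose_two_symm {n k : ℕ} (hk1 : 1 ≤ k) (hkn : k + 1 ≤ n) :
    n.choose (k + 1) * (k + 1).choose 2 = n.choose (n - k + 1) * (n - k + 1).choose 2 := by
  rw [Nat.choose_succ_mul_choose_two n hk1, Nat.choose_succ_mul_choose_two n (by omega),
    ← Nat.choose_symm (show k - 1 ≤ n - 2 by omega), show n - 2 - (k - 1) = n - k - 1 by omega]

theorem Finset.sum_powersetCard_sdiff {α M : Type*} [DecidableEq α] [AddCommMonoid M]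
    (t : Finset α) {j : ℕ} (hj : j ≤ #t) (f : Finset α → M) :
    ∑ a ∈ t.powersetCard j, f (t \ a) = ∑ a ∈ t.powersetCard (#t - j), f a := by
  refine sum_nbij' (t \ ·) (t \ ·) ?_ ?_ ?_ ?_ (fun _ _ => rfl)
  · intro a ha
    rw [mem_powersetCard] at ha ⊢
    exact ⟨sdiff_subset, by rw [card_sdiff_of_subset ha.1, ha.2]⟩
  · intro b hb
    rw [mem_powersetCard] at hb ⊢
    exact ⟨sdiff_subset, by rw [card_sdiff_of_subset hb.1, hb.2]; omega⟩
  · intro a ha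
    exact sdiff_sdiff_eq_self (mem_powersetCard.mp ha).1
  · intro b hb
    exact sdiff_sdiff_eq_self (mem_powersetCard.mp hb).1

theorem conj_u_eq_u_general {Ω S : Type*} [MeasurableSpace Ω]
    [Fintype S]
    {n : ℕ} (μ : Measure Ω)
    (X : Fin n → Ω → S)
    (k : ℕ) (hk1 : 1 ≤ k) (hk2 : k ≤ n - 1) :
    ((n.choose (k + 1) : ℝ) * ((k + 1).choose 2 : ℝ))⁻¹ *
      ∑ p ∈ univ.filter (fun p : Fin n × Fin n => p.1 < p.2),
        ∑ a ∈ (univ \ ({p.1, p.2} : Finset (Fin n))).powerset.filter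
            (fun a : Finset (Fin n) => a.card = k - 1),
          cmi μ (X p.1) (X p.2) (restr X (univ \ (a ∪ {p.1, p.2})))
    = uI μ X (n - k) := by
  rw [uI]
  rw [← Nat.cast_mul, ← Nat.cast_mul,
    Nat.choose_succ_mul_choose_two_symm hk1 (show k + 1 ≤ n by omega)]
  congr 1
  refine sum_congr rfl fun p hp => ?_
  have hpair : #(univ \ ({p.1, p.2} : Finset (Fin n))) = n - 2 := by
    rw [card_univ_sdiff, Fintype.card_fin, card_pair (mem_filter.mp hp).2.ne]
  have hcompl (a : Finset (Fin n)) :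
      univ \ (a ∪ {p.1, p.2}) = (univ \ {p.1, p.2}) \ a := by
    rw [union_comm, sdiff_sdiff_left, sup_eq_union]
  simp only [← powersetCard_eq_filter]
  let f (b : Finset (Fin n)) := cmi μ (X p.1) (X p.2) (restr X b)
  calc ∑ a ∈ powersetCard (k - 1) (univ \ {p.1, p.2}), f (univ \ (a ∪ {p.1, p.2}))
      = ∑ a ∈ powersetCard (k - 1) (univ \ {p.1, p.2}), f ((univ \ {p.1, p.2}) \ a) :=
        sum_congr rfl fun a _ => congrArg f (hcompl a)
    _ = ∑ a ∈ powersetCard (n - k - 1) (univ \ {p.1, p.2}), f a := by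
        rw [sum_powersetCard_sdiff _ (by omega), hpair, show n - 2 - (k - 1) = n - k - 1 by omega]

/-- Replacing each conditioning set by its complement in the
definition of `u_k` yields `u_{n-k}` (the entropic conjugate of `u_k`). -/
theorem conj_u_eq_u {Ω S : Type*} [MeasurableSpace Ω]
    [Fintype S] [MeasurableSpace S] [MeasurableSingletonClass S]
    {n : ℕ} (hn : 2 ≤ n) (μ : Measure Ω) [IsProbabilityMeasure μ]
    (X : Fin n → Ω → S) (hX : ∀ i, Measurable (X i))
    (k : ℕ) (hk1 : 1 ≤ k) (hk2 : k ≤ n - 1) :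
    ((n.choose (k + 1) : ℝ) * ((k + 1).choose 2 : ℝ))⁻¹ *
      ∑ p ∈ univ.filter (fun p : Fin n × Fin n => p.1 < p.2),
        ∑ a ∈ (univ \ ({p.1, p.2} : Finset (Fin n))).powerset.filter
            (fun a : Finset (Fin n) => a.card = k - 1),
          cmi μ (X p.1) (X p.2) (restr X (univ \ (a ∪ {p.1, p.2})))
    = uI μ X (n - k) :=
  conj_u_eq_u_general μ X k hk1 hk2
end
end

section
/- The S-information decomposes as Σ(X) = n · Σ_{k=1}^{n−1} u_k(X). -/
open MeasureTheory Finset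

noncomputable section

variable {Ω : Type*} [MeasurableSpace Ω]

/-!
Write `H(a)` for the entropy of `X^a` and `r_k` for its average over `|a| = k`. Each conditional
mutual information expands as `I(X_i ; X_j | X^a) = H(a ∪ i) + H(a ∪ j) - H(a ∪ {i, j}) - H(a)`,
and counting how often each subset occurs in the sum defining `u_k` gives the second-difference
identity `u_k = 2 r_k - r_{k+1} - r_{k-1}`. Hence `∑_{k=1}^{n-1} u_k` telescopes to
`r_1 - r_0 + r_{n-1} - r_n`, where `r_0 = 0` and
`n (r_1 + r_{n-1} - r_n) = ∑_j (H(j) + H(-j) - H(all)) = ∑_j I(X_j ; X^{-j})`.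
-/

namespace Finset

variable {ι M : Type*} [DecidableEq ι] [AddCommMonoid M]

theorem sum_powersetCard_sdiff_union {u t : Finset ι} (htu : t ⊆ u) (m : ℕ) (g : Finset ι → M) :
    ∑ a ∈ powersetCard m (u \ t), g (t ∪ a) = ∑ b ∈ powersetCard (m + #t) u with t ⊆ b, g b := by
  refine sum_nbij' (t ∪ ·) (· \ t) ?_ ?_ ?_ ?_ (fun _ _ => rfl)
  · intro a ha
    simp only [mem_filter, mem_powersetCard] at ha ⊢
    obtain ⟨hau, rfl⟩ := ha
    have hdisj : Disjoint t a := disjoint_of_subset_right hau disjoint_sdiff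
    refine ⟨⟨union_subset htu (hau.trans sdiff_subset), ?_⟩, subset_union_left⟩
    rw [card_union_of_disjoint hdisj, add_comm]
  · intro b hb
    simp only [mem_filter, mem_powersetCard] at hb ⊢
    obtain ⟨⟨hbu, hcard⟩, htb⟩ := hb
    refine ⟨sdiff_subset_sdiff hbu le_rfl, ?_⟩
    rw [card_sdiff_of_subset htb, hcard, Nat.add_sub_cancel]
  · intro a ha
    simp only [mem_powersetCard] at ha
    exact union_sdiff_cancel_left (disjoint_of_subset_right ha.1 disjoint_sdiff)
  · intro b hb
    simp only [mem_filter] at hb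
    exact union_sdiff_of_subset hb.2

theorem sum_powersetCard_compl [Fintype ι] {k : ℕ} (hk : k ≤ Fintype.card ι) (f : Finset ι → M) :
    ∑ a ∈ powersetCard k univ, f aᶜ = ∑ b ∈ powersetCard (Fintype.card ι - k) univ, f b := by
  refine sum_nbij' compl compl (fun a ha => ?_) (fun b hb => ?_) (fun a _ => compl_compl a)
    (fun b _ => compl_compl b) (fun _ _ => rfl)
  · simp only [mem_powersetCard_univ, card_compl] at ha ⊢
    rw [ha]
  · simp only [mem_powersetCard_univ, card_compl] at hb ⊢
    omega

variable [Fintype ι] [LinearOrder ι]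

theorem sum_pairs_sum_powersetCard_sdiff (m : ℕ) (g : Finset ι → M) :
    ∑ p ∈ univ.filter (fun p : ι × ι => p.1 < p.2),
        ∑ a ∈ powersetCard m (univ \ {p.1, p.2}), g a
      = (Fintype.card ι - m).choose 2 • ∑ a ∈ powersetCard m univ, g a := by
  rw [sum_comm' (t' := powersetCard m univ) (s' := fun a => {p ∈ aᶜ ×ˢ aᶜ | p.1 < p.2})]
  · rw [smul_sum]
    refine sum_congr rfl fun a ha => ?_
    rw [sum_const, card_product_filter_lt, card_compl, (mem_powersetCard.1 ha).2]
  · intro p a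
    simp only [mem_filter, mem_univ, true_and, mem_powersetCard, mem_product, mem_compl,
      subset_univ, subset_sdiff, disjoint_insert_right, disjoint_singleton_right]
    tauto

theorem sum_pairs_sum_powersetCard_sdiff_insert_insert (m : ℕ) (g : Finset ι → M) :
    ∑ p ∈ univ.filter (fun p : ι × ι => p.1 < p.2),
        ∑ a ∈ powersetCard m (univ \ {p.1, p.2}), g (insert p.1 (insert p.2 a))
      = (m + 2).choose 2 • ∑ c ∈ powersetCard (m + 2) univ, g c := by
  calc _ = ∑ p ∈ univ.filter (fun p : ι × ι => p.1 < p.2),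
        ∑ c ∈ powersetCard (m + 2) univ with {p.1, p.2} ⊆ c, g c := by
        refine sum_congr rfl fun p hp => ?_
        have h := sum_powersetCard_sdiff_union (subset_univ {p.1, p.2}) m g
        rw [card_pair (mem_filter.1 hp).2.ne] at h
        simpa only [insert_union, ← insert_eq] using h
    _ = ∑ c ∈ powersetCard (m + 2) univ, ∑ _p ∈ {p ∈ c ×ˢ c | p.1 < p.2}, g c := by
        refine sum_comm' fun p c => ?_
        simp only [mem_filter, mem_univ, true_and, mem_powersetCard, mem_product,
          subset_univ, insert_subset_iff, singleton_subset_iff]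
        tauto
    _ = _ := by
        rw [smul_sum]
        refine sum_congr rfl fun c hc => ?_
        rw [sum_const, card_product_filter_lt, (mem_powersetCard.1 hc).2]

theorem sum_filter_lt_add_swap (f : ι × ι → M) :
    ∑ p ∈ univ.filter (fun p : ι × ι => p.1 < p.2), (f p + f p.swap)
      = ∑ p ∈ univ.filter (fun p : ι × ι => p.1 ≠ p.2), f p := by
  have hswap : ∑ p ∈ univ.filter (fun p : ι × ι => p.1 < p.2), f p.swap
      = ∑ p ∈ univ.filter (fun p : ι × ι => p.2 < p.1), f p :=
    sum_nbij' Prod.swap Prod.swap (by simp) (by simp) (by simp) (by simp) (fun _ _ => rfl)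
  rw [sum_add_distrib, hswap, ← sum_union]
  · congr 1
    ext p
    simp only [mem_union, mem_filter, mem_univ, true_and]
    exact lt_or_lt_iff_ne
  · exact disjoint_filter.2 fun p _ h => (lt_asymm h).elim

theorem sum_pairs_sum_powersetCard_sdiff_insert (m : ℕ) (g : Finset ι → M) :
    ∑ p ∈ univ.filter (fun p : ι × ι => p.1 < p.2),
        ∑ a ∈ powersetCard m (univ \ {p.1, p.2}), (g (insert p.1 a) + g (insert p.2 a))
      = ((m + 1) * (Fintype.card ι - (m + 1))) • ∑ b ∈ powersetCard (m + 1) univ, g b := by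
  calc _ = ∑ p ∈ univ.filter (fun p : ι × ι => p.1 ≠ p.2),
        ∑ a ∈ powersetCard m (univ \ {p.1, p.2}), g (insert p.1 a) := by
        rw [← sum_filter_lt_add_swap]
        refine sum_congr rfl fun p _ => ?_
        rw [sum_add_distrib, Prod.fst_swap, Prod.snd_swap, pair_comm p.2]
    _ = ∑ p ∈ univ.filter (fun p : ι × ι => p.1 ≠ p.2),
        ∑ b ∈ powersetCard (m + 1) {p.2}ᶜ with {p.1} ⊆ b, g b := by
        refine sum_congr rfl fun p hp => ?_
        have hsdiff : univ \ {p.1, p.2} = {p.2}ᶜ \ {p.1} := by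
          ext i; simp only [mem_sdiff, mem_univ, mem_insert, mem_singleton, mem_compl]; tauto
        have hsub : ({p.1} : Finset ι) ⊆ {p.2}ᶜ := by simpa [eq_comm] using (mem_filter.1 hp).2
        rw [hsdiff]
        simpa only [← insert_eq, card_singleton] using sum_powersetCard_sdiff_union hsub m g
    _ = ∑ b ∈ powersetCard (m + 1) univ, ∑ _p ∈ b ×ˢ bᶜ, g b := by
        refine sum_comm' fun p b => ?_
        simp only [mem_filter, mem_univ, true_and, mem_powersetCard, mem_product, mem_compl,
          subset_univ, subset_compl_singleton, singleton_subset_iff]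
        constructor
        · rintro ⟨-, ⟨h2, hcard⟩, h1⟩; exact ⟨⟨h1, h2⟩, hcard⟩
        · rintro ⟨⟨h1, h2⟩, hcard⟩; exact ⟨fun h => h2 (h ▸ h1), ⟨h2, hcard⟩, h1⟩
    _ = _ := by
        rw [smul_sum]
        refine sum_congr rfl fun b hb => ?_
        rw [sum_const, card_product, card_compl, (mem_powersetCard.1 hb).2]

theorem sum_Icc_two_mul_sub_sub {R : Type*} [CommRing R] (f : ℕ → R) (N : ℕ) :
    ∑ k ∈ Icc 1 N, (2 * f k - f (k + 1) - f (k - 1)) = f 1 - f 0 + f N - f (N + 1) := by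
  induction N with
  | zero => simp
  | succ N ih =>
    rw [sum_Icc_succ_top (Nat.le_add_left 1 N), ih, Nat.add_sub_cancel]
    ring

end Finset

theorem Nat.choose_mul_choose_two_mul_two (n m : ℕ) :
    n.choose (m + 2) * (m + 2).choose 2 * 2 = (m + 1) * (n - (m + 1)) * n.choose (m + 1) := by
  have h := Nat.add_one_mul_choose_eq (m + 1) 1
  rw [Nat.choose_one_right] at h
  rw [mul_assoc, ← h, ← mul_assoc, Nat.choose_succ_right_eq]
  ring

theorem Nat.choose_mul_choose_two (n m : ℕ) :
    n.choose (m + 2) * (m + 2).choose 2 = (n - m).choose 2 * n.choose m := by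
  rw [← Nat.choose_symm_add, Nat.choose_mul (Nat.le_add_right m 2), Nat.add_sub_cancel_left,
    mul_comm]

section Entropy

variable {α β : Type*} [Fintype α] [Fintype β]

theorem ent_comp_of_injective (μ : Measure Ω) (Z : Ω → α) {f : α → β}
    (hf : Function.Injective f) : ent μ (f ∘ Z) = ent μ Z := by
  symm
  refine Fintype.sum_of_injective f hf _ _ (fun b hb => ?_) (fun a => ?_)
  · have : (f ∘ Z) ⁻¹' {b} = ∅ :=
      Set.eq_empty_of_forall_notMem fun ω h => hb ⟨Z ω, h⟩
    simp [this]
  · rw [Set.preimage_comp, ← Set.image_singleton, hf.preimage_image]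

theorem ent_of_unique [Unique α] (μ : Measure Ω) [IsProbabilityMeasure μ] (Z : Ω → α) :
    ent μ Z = 0 := by
  have : Z ⁻¹' {default} = Set.univ := Set.eq_univ_of_forall fun ω => Unique.eq_default (Z ω)
  simp [ent, this]

end Entropy

theorem pi_insert_split_injective {ι S : Type*} [DecidableEq ι] (i : ι) (a : Finset ι) :
    Function.Injective fun g : {x // x ∈ insert i a} → S =>
      (g ⟨i, mem_insert_self i a⟩, fun x : a => g ⟨x, mem_insert_of_mem x.2⟩) := by
  intro g₁ g₂ h
  funext ⟨x, hx⟩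
  rcases mem_insert.1 hx with rfl | hxa
  · exact congrArg Prod.fst h
  · exact congrFun (congrArg Prod.snd h) ⟨x, hxa⟩

section Subsets

variable {n : ℕ} {S : Type*} [Fintype S] (μ : Measure Ω) (X : Fin n → Ω → S)

theorem ent_prod_restr (i : Fin n) (a : Finset (Fin n)) :
    ent μ (fun ω => (X i ω, restr X a ω)) = ent μ (restr X (insert i a)) :=
  ent_comp_of_injective μ (restr X (insert i a)) (pi_insert_split_injective i a)

theorem ent_prod_prod_restr (i j : Fin n) (a : Finset (Fin n)) :
    ent μ (fun ω => (X i ω, X j ω, restr X a ω)) = ent μ (restr X (insert i (insert j a))) := by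
  rw [← ent_prod_restr]
  exact ent_comp_of_injective μ (fun ω => (X i ω, restr X (insert j a) ω))
    (Function.injective_id.prodMap (pi_insert_split_injective j a))

theorem ent_restr_singleton (j : Fin n) : ent μ (restr X {j}) = ent μ (X j) := by
  have h : restr X {j} = (fun s _ => s) ∘ X j := by
    funext ω ⟨i, hi⟩
    obtain rfl := mem_singleton.1 hi
    rfl
  rw [h, ent_comp_of_injective _ _ fun _ _ h => congrFun h ⟨j, mem_singleton_self j⟩]

theorem cmi_eq_ent_restr (i j : Fin n) (a : Finset (Fin n)) :
    cmi μ (X i) (X j) (restr X a) = ent μ (restr X (insert i a)) + ent μ (restr X (insert j a))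
      - ent μ (restr X (insert i (insert j a))) - ent μ (restr X a) := by
  rw [cmi, ent_prod_restr, ent_prod_restr, ent_prod_prod_restr]

theorem mi_restr_compl_eq_ent (j : Fin n) :
    mi μ (X j) (restr X {j}ᶜ) = ent μ (X j) + ent μ (restr X {j}ᶜ) - ent μ (restr X univ) := by
  rw [mi, ent_prod_restr, insert_compl_self]

theorem rE_eq_sum_powersetCard (k : ℕ) :
    rE μ X k = (n.choose k : ℝ)⁻¹ * ∑ a ∈ powersetCard k univ, ent μ (restr X a) := by
  rw [rE, powersetCard_eq_filter]

theorem uI_succ_eq_sum_powersetCard (m : ℕ) :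
    uI μ X (m + 1) = ((n.choose (m + 2) : ℝ) * ((m + 2).choose 2 : ℝ))⁻¹ *
      ∑ p ∈ univ.filter (fun p : Fin n × Fin n => p.1 < p.2),
        ∑ a ∈ powersetCard m (univ \ {p.1, p.2}), cmi μ (X p.1) (X p.2) (restr X a) := by
  simp only [uI, powersetCard_eq_filter, Nat.add_sub_cancel]

theorem uI_succ_eq (m : ℕ) (hm : m + 2 ≤ n) :
    uI μ X (m + 1) = 2 * rE μ X (m + 1) - rE μ X (m + 2) - rE μ X m := by
  have hsum : ∑ p ∈ univ.filter (fun p : Fin n × Fin n => p.1 < p.2),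
        ∑ a ∈ powersetCard m (univ \ {p.1, p.2}), cmi μ (X p.1) (X p.2) (restr X a)
      = ((m + 1) * (n - (m + 1)) : ℕ) * ∑ a ∈ powersetCard (m + 1) univ, ent μ (restr X a)
        - ((m + 2).choose 2 : ℕ) * ∑ a ∈ powersetCard (m + 2) univ, ent μ (restr X a)
        - ((n - m).choose 2 : ℕ) * ∑ a ∈ powersetCard m univ, ent μ (restr X a) := by
    simp only [cmi_eq_ent_restr, sum_sub_distrib]
    rw [sum_pairs_sum_powersetCard_sdiff_insert m (fun a => ent μ (restr X a)),
      sum_pairs_sum_powersetCard_sdiff_insert_insert m (fun a => ent μ (restr X a)),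
      sum_pairs_sum_powersetCard_sdiff, Fintype.card_fin]
    simp only [nsmul_eq_mul]
  have hc : ∀ k ≤ n, (n.choose k : ℝ) ≠ 0 := fun k hk =>
    Nat.cast_ne_zero.2 (Nat.choose_pos hk).ne'
  have hm2 : ((m + 2).choose 2 : ℝ) ≠ 0 := Nat.cast_ne_zero.2 (Nat.choose_pos (by omega)).ne'
  have hc2 : ((n.choose (m + 2) : ℝ) * ((m + 2).choose 2 : ℝ)) ≠ 0 := mul_ne_zero (hc _ hm) hm2
  have h1 : ((n.choose (m + 2) : ℝ) * ((m + 2).choose 2 : ℝ))⁻¹ * ((m + 1) * (n - (m + 1)) : ℕ)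
      = 2 * (n.choose (m + 1) : ℝ)⁻¹ := by
    rw [inv_mul_eq_iff_eq_mul₀ hc2, ← mul_assoc, eq_mul_inv_iff_mul_eq₀ (hc _ (by omega))]
    exact_mod_cast (Nat.choose_mul_choose_two_mul_two n m).symm
  have h2 : ((n.choose (m + 2) : ℝ) * ((m + 2).choose 2 : ℝ))⁻¹ * ((m + 2).choose 2 : ℕ)
      = (n.choose (m + 2) : ℝ)⁻¹ := by
    rw [mul_inv, mul_assoc, inv_mul_cancel₀ hm2, mul_one]
  have h3 : ((n.choose (m + 2) : ℝ) * ((m + 2).choose 2 : ℝ))⁻¹ * ((n - m).choose 2 : ℕ)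
      = (n.choose m : ℝ)⁻¹ := by
    rw [inv_mul_eq_iff_eq_mul₀ hc2, eq_mul_inv_iff_mul_eq₀ (hc _ (by omega))]
    exact_mod_cast (Nat.choose_mul_choose_two n m).symm
  rw [uI_succ_eq_sum_powersetCard, hsum, rE_eq_sum_powersetCard, rE_eq_sum_powersetCard,
    rE_eq_sum_powersetCard, mul_sub, mul_sub, ← mul_assoc, ← mul_assoc, ← mul_assoc, h1, h2, h3]
  ring

theorem rE_zero [IsProbabilityMeasure μ] : rE μ X 0 = 0 := by
  rw [rE_eq_sum_powersetCard, powersetCard_zero, sum_singleton, ent_of_unique, mul_zero]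

theorem rE_one : rE μ X 1 = (n : ℝ)⁻¹ * ∑ j, ent μ (X j) := by
  rw [rE_eq_sum_powersetCard, powersetCard_one, sum_map, Nat.choose_one_right]
  simp only [Function.Embedding.coeFn_mk, ent_restr_singleton]

theorem rE_sub_one (hn : 1 ≤ n) : rE μ X (n - 1) = (n : ℝ)⁻¹ * ∑ j, ent μ (restr X {j}ᶜ) := by
  have h := sum_powersetCard_compl (ι := Fin n) (by simpa using hn) fun a => ent μ (restr X a)
  rw [Fintype.card_fin] at h
  rw [rE_eq_sum_powersetCard, ← h, powersetCard_one, sum_map, Nat.choose_symm hn,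
    Nat.choose_one_right]
  rfl

theorem rE_self : rE μ X n = ent μ (restr X univ) := by
  have h : powersetCard n (univ : Finset (Fin n)) = {univ} := by
    simpa using powersetCard_self (univ : Finset (Fin n))
  rw [rE_eq_sum_powersetCard, h, sum_singleton, Nat.choose_self, Nat.cast_one, inv_one, one_mul]

theorem sum_uI_eq (hn : 1 ≤ n) :
    ∑ k ∈ Icc 1 (n - 1), uI μ X k = rE μ X 1 - rE μ X 0 + rE μ X (n - 1) - rE μ X n := by
  have hk : ∀ k ∈ Icc 1 (n - 1),
      uI μ X k = 2 * rE μ X k - rE μ X (k + 1) - rE μ X (k - 1) := by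
    intro k hk
    obtain ⟨m, rfl⟩ : ∃ m, k = m + 1 := ⟨k - 1, by grind⟩
    rw [uI_succ_eq μ X m (by grind), Nat.add_sub_cancel]
  rw [sum_congr rfl hk, sum_Icc_two_mul_sub_sub, Nat.sub_add_cancel hn]

end Subsets

theorem sinfo_decomposition_general {Ω S : Type*} [MeasurableSpace Ω]
    [Fintype S]
    {n : ℕ} (hn : 2 ≤ n) (μ : Measure Ω) [IsProbabilityMeasure μ]
    (X : Fin n → Ω → S) :
    (∑ j : Fin n, mi μ (X j) (restr X ({j} : Finset (Fin n))ᶜ))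
      = (n : ℝ) * ∑ k ∈ Finset.Icc 1 (n - 1), uI μ X k := by
  have hn₀ : (n : ℝ) ≠ 0 := Nat.cast_ne_zero.2 (by omega)
  rw [sum_uI_eq μ X (by omega), rE_one, rE_zero, rE_sub_one μ X (by omega), rE_self,
    sum_congr rfl fun j _ => mi_restr_compl_eq_ent μ X j, sum_sub_distrib, sum_add_distrib,
    sum_const, card_univ, Fintype.card_fin, nsmul_eq_mul]
  field_simp
  ring

/-- `Σ(X) = n ∑_{k=1}^{n-1} u_k(X)`. -/
theorem sinfo_decomposition {Ω S : Type*} [MeasurableSpace Ω]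
    [Fintype S] [MeasurableSpace S] [MeasurableSingletonClass S]
    {n : ℕ} (hn : 2 ≤ n) (μ : Measure Ω) [IsProbabilityMeasure μ]
    (X : Fin n → Ω → S) (hX : ∀ i, Measurable (X i)) :
    (∑ j : Fin n, mi μ (X j) (restr X ({j} : Finset (Fin n))ᶜ))
      = (n : ℝ) * ∑ k ∈ Finset.Icc 1 (n - 1), uI μ X k :=
  sinfo_decomposition_general hn μ X
end
end
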